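/- Completeness of the variant rule for finite-state programs: Let M be a finitely-branching MDP with absorbing terminal state ⊥ whose state space S is finite, and suppose M is almost surely terminating from the initial state σ. Then there exist H ∈ ℕ, ε > 0 and a function U : S → ℕ such that U(⊥) = 0; 1 ≤ U(s) ≤ H for every s ∈ Reach(σ) with s ≠ ⊥; and for every s ∈ Reach(σ) with s ≠ ⊥ and every action μ ∈ Act(s), μ({s' : U(s') < U(s)}) ≥ ε. -/

import Mathlib

open scoped ENNReal Classical

/-- A finitely-branching MDP on a state space `S`: each state has a nonempty finite
set of available actions, each a finitely-supported PMF on `S`. -/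
structure MDP (S : Type) where
  act : S → Finset (PMF S)
  act_nonempty : ∀ s, (act s).Nonempty
  act_finSupp : ∀ s, ∀ μ ∈ act s, (μ : PMF S).support.Finite

/-- A scheduler maps every history `(s₀, …, sₙ)` (given as the list of earlier
states `s₀, …, sₙ₋₁` together with the current state `sₙ`) to an available action. -/
structure Scheduler {S : Type} (M : MDP S) where
  choose : List S → S → PMF S
  choose_mem : ∀ hist s, choose hist s ∈ M.act s

namespace MDP

variable {S : Type}

/-- Reachability: `s'` is reachable from `σ` via a finite path each of whose steps
lies in the support of some available action. -/
inductive Reach (M : MDP S) (σ : S) : S → Prop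
  | refl : Reach M σ σ
  | step {s s' : S} (μ : PMF S) : Reach M σ s → μ ∈ M.act s → s' ∈ μ.support → Reach M σ s'

/-- Probability that the run (currently at `s`, with past history `hist`) visits the
set `T` within the next `k` steps, under scheduler `𝔰`. -/
noncomputable def hitProbAux (M : MDP S) (𝔰 : Scheduler M) (T : Set S) :
    ℕ → List S → S → ℝ≥0∞
  | 0, _, s => if s ∈ T then 1 else 0
  | k + 1, hist, s =>
      if s ∈ T then 1
      else ∑' s', (𝔰.choose hist s) s' * hitProbAux M 𝔰 T k (hist ++ [s]) s'

/-- Probability that the run started at `σ` visits `T` within the first `k` steps. -/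
noncomputable def hitProbWithin (M : MDP S) (𝔰 : Scheduler M) (σ : S) (T : Set S)
    (k : ℕ) : ℝ≥0∞ :=
  hitProbAux M 𝔰 T k [] σ

/-- Probability that the run started at `σ` ever visits `T`, under scheduler `𝔰`. -/
noncomputable def hitProb (M : MDP S) (𝔰 : Scheduler M) (σ : S) (T : Set S) : ℝ≥0∞ :=
  ⨆ k, hitProbWithin M 𝔰 σ T k

/-- The terminal state `term` is absorbing: the only action there is the Dirac PMF. -/
def Absorbing (M : MDP S) (term : S) : Prop :=
  M.act term = {PMF.pure term}

/-- Termination probability: infimum over schedulers of the probability of visiting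
the terminal state. -/
noncomputable def PrTerm (M : MDP S) (term σ : S) : ℝ≥0∞ :=
  ⨅ 𝔰 : Scheduler M, hitProb M 𝔰 σ {term}

/-- Almost-sure termination from `σ`. -/
def AST (M : MDP S) (term σ : S) : Prop := PrTerm M term σ = 1

/-- Mass a PMF assigns to a set. -/
noncomputable def mass (μ : PMF S) (A : Set S) : ℝ≥0∞ := ∑' a : A, μ a

/-- Expected value of a real-valued function under a (finitely supported) PMF. -/
noncomputable def expect (μ : PMF S) (V : S → ℝ) : ℝ := ∑' s, (μ s).toReal * V s

/-- `V` is a supermartingale function on the states reachable from `σ`. -/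
def SupermartingaleOn (M : MDP S) (σ : S) (V : S → ℝ) : Prop :=
  ∀ s, M.Reach σ s → ∀ μ ∈ M.act s, expect μ V ≤ V s

/-- `(Ψ, p)` is a stochastic invariant for initial state `σ`: under every scheduler the
probability that the run ever leaves `Ψ` is at most `p`. -/
def StochasticInvariant (M : MDP S) (σ : S) (Ψ : Set S) (p : ℝ) : Prop :=
  ⨆ 𝔰 : Scheduler M, hitProb M 𝔰 σ Ψᶜ ≤ ENNReal.ofReal p

end MDP

/-
Let `A₀ = {⊥}` and let `Aₙ₊₁` add to `Aₙ` the states all of whose actions reach `Aₙ` with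
positive probability. On a finite state space this increasing chain stabilises at some `A_N`,
and then every state outside `A_N` has an action that keeps the run outside `A_N`. If a
reachable state lay outside `A_N`, the scheduler that follows a path to it and then keeps the
run outside `A_N` would avoid `⊥` with at least the (positive) probability of that path,
contradicting almost-sure termination. So all reachable states lie in `A_N`, and the rank
`U(s) = min {n | s ∈ Aₙ}` is a variant: every action at a state of rank `n + 1` moves to a
state of rank at most `n` with probability at least the least positive transition probability.
-/

theorem PMF.tsum_mul_add_apply_mul_le_one {S : Type} (μ : PMF S) {g : S → ℝ≥0∞}
    (hg : ∀ s, g s ≤ 1) {x : S} {r : ℝ≥0∞} (hx : g x + r ≤ 1) : ∑' s, μ s * g s + μ x * r ≤ 1 := by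
  have hle : ∀ s, g s + (if s = x then r else 0) ≤ 1 := fun s => by
    split_ifs with h
    · exact h ▸ hx
    · simpa using hg s
  calc ∑' s, μ s * g s + μ x * r
      = ∑' s, μ s * (g s + if s = x then r else 0) := by
        simp only [mul_add, ENNReal.tsum_add, mul_ite, mul_zero, tsum_ite_eq]
    _ ≤ ∑' s, μ s := ENNReal.tsum_le_tsum fun s => mul_le_of_le_one_right' (hle s)
    _ = 1 := μ.tsum_coe

theorem PMF.exists_pos_le_apply_of_mem_support {S : Type} [Fintype S] (A : Finset (PMF S)) :
    ∃ ε : ℝ, 0 < ε ∧ ∀ μ ∈ A, ∀ s ∈ μ.support, ENNReal.ofReal ε ≤ μ s := by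
  set F := (A ×ˢ Finset.univ).filter fun x : PMF S × S => x.1 x.2 ≠ 0
  set δ := min 1 (F.inf fun x => x.1 x.2)
  have hδ0 : δ ≠ 0 := by
    refine (lt_min one_pos ((Finset.lt_inf_iff ENNReal.zero_lt_top).mpr fun x hx => ?_)).ne'
    exact pos_iff_ne_zero.mpr (Finset.mem_filter.mp hx).2
  have hδtop : δ ≠ ⊤ := ne_top_of_le_ne_top ENNReal.one_ne_top (min_le_left _ _)
  refine ⟨δ.toReal, ENNReal.toReal_pos hδ0 hδtop, fun μ hμ s hs => ?_⟩
  rw [ENNReal.ofReal_toReal hδtop]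
  exact (min_le_right _ _).trans
    (Finset.inf_le (f := fun x : PMF S × S => x.1 x.2) (b := (μ, s))
      (Finset.mem_filter.mpr ⟨Finset.mem_product.mpr ⟨hμ, Finset.mem_univ s⟩, hs⟩))

namespace MDP

variable {S : Type} {M : MDP S}

theorem apply_le_mass (μ : PMF S) {A : Set S} {a : S} (ha : a ∈ A) : μ a ≤ mass μ A :=
  ENNReal.le_tsum (⟨a, ha⟩ : A)

section HittingProbabilities

variable (𝔰 : Scheduler M) (T : Set S)

theorem hitProbAux_le_one (k : ℕ) (hist : List S) (s : S) : hitProbAux M 𝔰 T k hist s ≤ 1 := by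
  induction k generalizing hist s with
  | zero => rw [hitProbAux]; split <;> simp
  | succ k ih =>
    rw [hitProbAux]
    split
    · exact le_rfl
    · calc ∑' s', 𝔰.choose hist s s' * hitProbAux M 𝔰 T k (hist ++ [s]) s'
          ≤ ∑' s', 𝔰.choose hist s s' :=
            ENNReal.tsum_le_tsum fun _ => mul_le_of_le_one_right' (ih _ _)
        _ = 1 := PMF.tsum_coe _

theorem hitProbAux_eq_zero_of_mem_trap {C : Set S} (hCT : Disjoint C T)
    (hC : ∀ hist s, s ∈ C → (𝔰.choose hist s).support ⊆ C) (k : ℕ) (hist : List S) {s : S}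
    (hs : s ∈ C) : hitProbAux M 𝔰 T k hist s = 0 := by
  induction k generalizing hist s with
  | zero => simp [hitProbAux, hCT.notMem_of_mem_left hs]
  | succ k ih =>
    rw [hitProbAux, if_neg (hCT.notMem_of_mem_left hs), ENNReal.tsum_eq_zero]
    intro s'
    by_cases hs' : s' ∈ (𝔰.choose hist s).support
    · rw [ih _ (hC hist s hs hs'), mul_zero]
    · rw [PMF.apply_eq_zero_iff _ _ |>.mpr hs', zero_mul]

theorem hitProbAux_add_prod_le_one {C : Set S} (hCT : Disjoint C T)
    (hC : ∀ hist s, s ∈ C → (𝔰.choose hist s).support ⊆ C) {m : ℕ} {p : ℕ → S}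
    {ν : ℕ → PMF S} (hpT : ∀ i ≤ m, p i ∉ T) (hpm : p m ∈ C)
    (hν : ∀ i < m, p i ∉ C → ∀ hist : List S, hist.length = i → 𝔰.choose hist (p i) = ν i)
    {j : ℕ} (hj : j ≤ m) (k : ℕ) (hist : List S) (hlen : hist.length = j) :
    hitProbAux M 𝔰 T k hist (p j) + ∏ i ∈ Finset.Ico j m, ν i (p (i + 1)) ≤ 1 := by
  have hprod : ∀ j, ∏ i ∈ Finset.Ico j m, ν i (p (i + 1)) ≤ 1 := fun j =>
    Finset.prod_le_one' fun i _ => PMF.coe_le_one _ _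
  induction hj using Nat.decreasingInduction generalizing k hist with
  | self => simp [hitProbAux_eq_zero_of_mem_trap 𝔰 T hCT hC k hist hpm]
  | of_succ j hjm ih =>
    by_cases hpC : p j ∈ C
    · simpa [hitProbAux_eq_zero_of_mem_trap 𝔰 T hCT hC k hist hpC] using hprod j
    cases k with
    | zero => simpa [hitProbAux, hpT j hjm.le] using hprod j
    | succ k =>
      rw [hitProbAux, if_neg (hpT j hjm.le), hν j hjm hpC hist hlen,
        Finset.prod_eq_prod_Ico_succ_bot hjm]
      exact (ν j).tsum_mul_add_apply_mul_le_one (hitProbAux_le_one 𝔰 T k _)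
        (ih k _ (by simp [hlen]))

end HittingProbabilities

def IsPath (M : MDP S) (m : ℕ) (p : ℕ → S) (ν : ℕ → PMF S) : Prop :=
  ∀ i < m, ν i ∈ M.act (p i) ∧ p (i + 1) ∈ (ν i).support

theorem Reach.exists_path {σ s : S} (h : M.Reach σ s) :
    ∃ (m : ℕ) (p : ℕ → S) (ν : ℕ → PMF S), M.IsPath m p ν ∧ p 0 = σ ∧ p m = s := by
  induction h with
  | refl =>
    exact ⟨0, fun _ => σ, fun _ => PMF.pure σ, fun i hi => absurd hi i.not_lt_zero, rfl, rfl⟩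
  | @step t t' μ _ hμ ht' ih =>
    obtain ⟨m, p, ν, hpath, hp0, hpm⟩ := ih
    refine ⟨m + 1, Function.update p (m + 1) t', Function.update ν m μ, fun i hi => ?_,
      by simp [hp0], by simp⟩
    rcases Nat.lt_succ_iff_lt_or_eq.mp hi with hi | rfl
    · simpa [Function.update, hi.ne, hi.ne', (Nat.lt_succ_of_lt hi).ne] using hpath i hi
    · simpa [Function.update, hpm] using ⟨hμ, ht'⟩

theorem Absorbing.eq_of_mem_support {term : S} (hterm : M.Absorbing term) {μ : PMF S}
    (hμ : μ ∈ M.act term) {s : S} (hs : s ∈ μ.support) : s = term := by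
  rw [hterm, Finset.mem_singleton] at hμ
  simpa [hμ] using hs

theorem Absorbing.path_eq {term : S} (hterm : M.Absorbing term) {m : ℕ} {p : ℕ → S}
    {ν : ℕ → PMF S} (hpath : M.IsPath m p ν) {j : ℕ} (hj : p j = term) {i : ℕ} (hji : j ≤ i)
    (him : i ≤ m) : p i = term := by
  induction i, hji using Nat.le_induction with
  | base => exact hj
  | succ i _ ih =>
    have ⟨hν, hsupp⟩ := hpath i him
    exact hterm.eq_of_mem_support (ih (Nat.le_of_succ_le him) ▸ hν) hsupp

theorem exists_hitProb_lt_one_of_reach_trap {term σ : S} (hterm : M.Absorbing term)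
    {C : Set S} (htermC : term ∉ C) (hC : ∀ s ∈ C, ∃ μ ∈ M.act s, μ.support ⊆ C) {s₀ : S}
    (hreach : M.Reach σ s₀) (hs₀ : s₀ ∈ C) : ∃ 𝔰 : Scheduler M, hitProb M 𝔰 σ {term} < 1 := by
  obtain ⟨m, p, ν, hpath, hp0, hpm⟩ := hreach.exists_path
  have htrap : ∀ s, ∃ μ ∈ M.act s, s ∈ C → μ.support ⊆ C := fun s => by
    by_cases hs : s ∈ C
    · obtain ⟨μ, hμ, hsupp⟩ := hC s hs
      exact ⟨μ, hμ, fun _ => hsupp⟩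
    · obtain ⟨μ, hμ⟩ := M.act_nonempty s
      exact ⟨μ, hμ, fun h => absurd h hs⟩
  choose trap htrapAct htrapSupp using htrap
  let 𝔰 : Scheduler M :=
    { choose := fun hist t =>
        if hist.length < m ∧ t = p hist.length ∧ t ∉ C then ν hist.length else trap t
      choose_mem := fun hist t => by
        split_ifs with h
        · exact h.2.1 ▸ (hpath _ h.1).1
        · exact htrapAct t }
  have h𝔰C : ∀ hist s, s ∈ C → (𝔰.choose hist s).support ⊆ C := fun hist s hs => by
    simpa [𝔰, hs] using htrapSupp s hs
  have h𝔰ν : ∀ i < m, p i ∉ C → ∀ hist : List S, hist.length = i → 𝔰.choose hist (p i) = ν i :=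
    fun i hi hpC hist hlen => by simp [𝔰, hlen, hi, hpC]
  have hpT : ∀ i ≤ m, p i ∉ ({term} : Set S) := fun i hi h =>
    htermC (hterm.path_eq hpath h hi le_rfl ▸ hpm ▸ hs₀)
  set r := ∏ i ∈ Finset.Ico 0 m, ν i (p (i + 1))
  have hr0 : r ≠ 0 := Finset.prod_ne_zero_iff.mpr fun i hi => (hpath i (Finset.mem_Ico.mp hi).2).2
  have hr1 : r ≤ 1 := Finset.prod_le_one' fun i _ => PMF.coe_le_one _ _
  have hle : hitProb M 𝔰 σ {term} ≤ 1 - r := iSup_le fun k => by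
    refine ENNReal.le_sub_of_add_le_right (ne_top_of_le_ne_top ENNReal.one_ne_top hr1) ?_
    have h := hitProbAux_add_prod_le_one 𝔰 {term} (Set.disjoint_singleton_right.mpr htermC)
      h𝔰C hpT (hpm ▸ hs₀) h𝔰ν (Nat.zero_le m) k [] rfl
    rwa [hp0] at h
  exact ⟨𝔰, hle.trans_lt (ENNReal.sub_lt_self ENNReal.one_ne_top one_ne_zero hr0)⟩

def attractor (M : MDP S) (term : S) : ℕ → Set S
  | 0 => {term}
  | n + 1 => attractor M term n ∪ {s | ∀ μ ∈ M.act s, ∃ s' ∈ μ.support, s' ∈ attractor M term n}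

variable {term : S}

theorem attractor_monotone : Monotone (M.attractor term) :=
  monotone_nat_of_le_succ fun _ => Set.subset_union_left

theorem term_mem_attractor (n : ℕ) : term ∈ M.attractor term n :=
  attractor_monotone (Nat.zero_le n) rfl

theorem exists_attractor_succ_eq [Finite S] (M : MDP S) (term : S) :
    ∃ N, M.attractor term (N + 1) = M.attractor term N := by
  obtain ⟨N, hN⟩ := WellFoundedGT.monotone_chain_condition ⟨_, M.attractor_monotone (term := term)⟩
  exact ⟨N, (hN _ N.le_succ).symm⟩

theorem exists_support_subset_compl_attractor {N : ℕ}
    (hN : M.attractor term (N + 1) = M.attractor term N) {s : S} (hs : s ∉ M.attractor term N) :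
    ∃ μ ∈ M.act s, μ.support ⊆ (M.attractor term N)ᶜ := by
  rw [← hN, attractor, Set.mem_union, Set.mem_ofPred_eq] at hs
  push Not at hs
  obtain ⟨μ, hμ, hsupp⟩ := hs.2
  exact ⟨μ, hμ, hsupp⟩

theorem mem_attractor_of_reach {σ : S} (hterm : M.Absorbing term) (hAST : M.AST term σ)
    {N : ℕ} (hN : M.attractor term (N + 1) = M.attractor term N) {s : S} (hs : M.Reach σ s) :
    s ∈ M.attractor term N := by
  by_contra hsN
  obtain ⟨𝔰, h𝔰⟩ := exists_hitProb_lt_one_of_reach_trap hterm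
    (Set.notMem_compl_iff.mpr (term_mem_attractor N))
    (fun _ => exists_support_subset_compl_attractor hN) hs hsN
  exact h𝔰.not_ge (hAST ▸ iInf_le _ 𝔰)

/-- The first attractor layer containing `s` (junk value `0` if there is none). -/
noncomputable def rank (M : MDP S) (term s : S) : ℕ :=
  sInf {n | s ∈ M.attractor term n}

theorem rank_term : M.rank term term = 0 :=
  Nat.sInf_eq_zero.mpr (Or.inl rfl)

variable {s : S} {n : ℕ}

theorem mem_attractor_rank (hs : s ∈ M.attractor term n) : s ∈ M.attractor term (M.rank term s) :=
  Nat.sInf_mem (s := {n | s ∈ M.attractor term n}) ⟨n, hs⟩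

theorem rank_le (hs : s ∈ M.attractor term n) : M.rank term s ≤ n :=
  Nat.sInf_le hs

theorem rank_pos (hs : s ∈ M.attractor term n) (hne : s ≠ term) : 0 < M.rank term s :=
  Nat.pos_of_ne_zero fun h0 => hne (by simpa [h0, attractor] using mem_attractor_rank hs)

theorem exists_mem_support_rank_lt (hs : s ∈ M.attractor term n) (hne : s ≠ term) {μ : PMF S}
    (hμ : μ ∈ M.act s) : ∃ s' ∈ μ.support, M.rank term s' < M.rank term s := by
  obtain ⟨r, hr⟩ := Nat.exists_eq_add_one_of_ne_zero (rank_pos hs hne).ne'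
  have hmem := mem_attractor_rank hs
  rw [hr] at hmem
  rcases hmem with hlow | hstep
  · exact absurd (rank_le hlow) (by omega)
  · obtain ⟨s', hs', hs'r⟩ := hstep μ hμ
    exact ⟨s', hs', by have := rank_le hs'r; omega⟩

end MDP

/-- **Completeness of the variant rule for finite-state programs.** If the state space is
finite and `M` is almost surely terminating from `σ`, then there are a bound `H`, an
`ε > 0` and a variant `U : S → ℕ` with `U(term) = 0`, `1 ≤ U(s) ≤ H` on reachable
non-terminal states, such that every action at a reachable non-terminal state decreases `U`
with probability at least `ε`. -/
theorem variant_rule_complete_finite {S : Type} [Fintype S] (M : MDP S) (term σ : S)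
    (hterm : M.Absorbing term) (hAST : M.AST term σ) :
    ∃ (H : ℕ) (ε : ℝ) (U : S → ℕ), 0 < ε ∧
      U term = 0 ∧
      (∀ s, M.Reach σ s → s ≠ term → 1 ≤ U s ∧ U s ≤ H) ∧
      (∀ s, M.Reach σ s → s ≠ term → ∀ μ ∈ M.act s,
        ENNReal.ofReal ε ≤ MDP.mass μ {s' | U s' < U s}) := by
  obtain ⟨N, hN⟩ := M.exists_attractor_succ_eq term
  have hreach : ∀ s, M.Reach σ s → s ∈ M.attractor term N := fun _ =>
    MDP.mem_attractor_of_reach hterm hAST hN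
  obtain ⟨ε, hε, hεle⟩ := PMF.exists_pos_le_apply_of_mem_support (Finset.univ.biUnion M.act)
  refine ⟨N, ε, M.rank term, hε, MDP.rank_term,
    fun s hs hne => ⟨MDP.rank_pos (hreach s hs) hne, MDP.rank_le (hreach s hs)⟩,
    fun s hs hne μ hμ => ?_⟩
  obtain ⟨s', hs', hlt⟩ := MDP.exists_mem_support_rank_lt (hreach s hs) hne hμ
  exact (hεle μ (Finset.mem_biUnion.mpr ⟨s, Finset.mem_univ s, hμ⟩) s' hs').trans
    (MDP.apply_le_mass μ (A := {s' | M.rank term s' < M.rank term s}) hlt)
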